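/- Let O be a graded non-symmetric k-linear operad and I ⊂ O an associative operadic ideal. Then: (1) the circle product x∘y := x{y} on the ideal complex C(I) is associative, i.e., (x∘y)∘z = x∘(y∘z) for all x,y,z ∈ C(I); (2) C(I) with the circle product is a (non-unital) graded associative algebra, and the Gerstenhaber Lie bracket restricted to C(I) is the commutator of the circle product; (3) for all a ∈ C(O) and x,y ∈ C(I), the Gerstenhaber relation [a, x∘y] = [a,x]∘y + (−1)^{(|a|−1)|x|} x∘[a,y] holds, where |a| denotes total degree in C(O) and |x|,|y| total degrees in C(I). -/

import Mathlib

/-!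
Brace algebras and associative operadic ideals (Lemma `brace_associative`).

A graded non-symmetric `k`-linear operad `O` is presented here through its
operad complex `C(O)`: the underlying `k`-vector space `V` of `C(O)` graded by
total degree (the total degree of `x ∈ C^{p,q}(O) = O(p)^{p+q-1}` is `p + q`),
together with the unary brace `x{y}` and binary brace `x{y,z}` operations
induced by the infinitesimal compositions, and an operadic ideal `I ⊆ O`
presented through its ideal complex `C(I) ⊆ C(O)` (recall that
`C^{p,q}(I) = I(p+1)^{p+q} ⊆ C^{p+1,q}(O)`, so the total degree of an element of
`C(I)` equals its total degree in `C(O)` minus one).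
-/

universe u v

structure BraceIdealContext (k : Type u) [Field k] where
  /-- the underlying space of the operad complex `C(O)` -/
  V : Type v
  [addCommGroup : AddCommGroup V]
  [module : Module k V]
  /-- `grading n` is the subspace of elements of total degree `n` in `C(O)` -/
  grading : ℤ → Submodule k V
  /-- the ideal complex `C(I)` as a subspace of `C(O)`; an element of
  `C(O)`-total degree `n` lying in the ideal has total degree `n - 1` in `C(I)` -/
  ideal : Submodule k V
  /-- the unary brace operation `x{y}` -/
  brace₁ : V →ₗ[k] V →ₗ[k] V
  /-- the binary brace operation `x{y,z}` -/
  brace₂ : V →ₗ[k] V →ₗ[k] V →ₗ[k] V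
  brace₁_mem : ∀ {a b : ℤ} {x y : V}, x ∈ grading a → y ∈ grading b →
      brace₁ x y ∈ grading (a + b - 1)
  brace₂_mem : ∀ {a b c : ℤ} {x y z : V}, x ∈ grading a → y ∈ grading b →
      z ∈ grading c → brace₂ x y z ∈ grading (a + b + c - 2)
  /-- the brace ideal property -/
  brace₁_ideal_left : ∀ {x y : V}, x ∈ ideal → brace₁ x y ∈ ideal
  /-- the brace ideal property -/
  brace₁_ideal_right : ∀ {x y : V}, y ∈ ideal → brace₁ x y ∈ ideal
  /-- the instance
  `x{y}{z} = x{y,z} + x{y{z}} + (-1)^{(|y|-1)(|z|-1)} x{z,y}`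
  of the brace relation -/
  brace_rel : ∀ {b c : ℤ} (x : V) {y z : V}, y ∈ grading b → z ∈ grading c →
      brace₁ (brace₁ x y) z =
        brace₂ x y z + brace₁ x (brace₁ y z) +
          (Int.negOnePow ((b - 1) * (c - 1)) : ℤ) • brace₂ x z y

attribute [instance] BraceIdealContext.addCommGroup BraceIdealContext.module

namespace BraceIdealContext

variable {k : Type u} [Field k] (C : BraceIdealContext k)

/-- the circle product `x ∘ y := x{y}` on the ideal complex `C(I)` -/
def circle (x y : C.V) : C.V := C.brace₁ x y

/-- the Gerstenhaber Lie bracket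
`[x,y] = x{y} - (-1)^{(|x|-1)(|y|-1)} y{x}` of elements of total degrees
`a` and `b` in `C(O)` -/
def bracket (a b : ℤ) (x y : C.V) : C.V :=
  C.brace₁ x y - (Int.negOnePow ((a - 1) * (b - 1)) : ℤ) • C.brace₁ y x

end BraceIdealContext

namespace BraceIdealContext

variable {k : Type u} [Field k] (C : BraceIdealContext k)

def associator (x y z : C.V) : C.V :=
  C.brace₁ (C.brace₁ x y) z - C.brace₁ x (C.brace₁ y z)

def IsAssociativeIdeal : Prop :=
  ∀ (x y z : C.V), y ∈ C.ideal → z ∈ C.ideal → C.brace₂ x y z = 0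

variable {C}

theorem associator_eq_brace₂ {b c : ℤ} (x : C.V) {y z : C.V} (hy : y ∈ C.grading b)
    (hz : z ∈ C.grading c) :
    C.associator x y z =
      C.brace₂ x y z + (Int.negOnePow ((b - 1) * (c - 1)) : ℤ) • C.brace₂ x z y := by
  rw [associator, C.brace_rel x hy hz]
  abel

/-- `x{y}` is a graded right pre-Lie product. -/
theorem associator_swap {b c : ℤ} (x : C.V) {y z : C.V} (hy : y ∈ C.grading b)
    (hz : z ∈ C.grading c) :
    C.associator x y z = (Int.negOnePow ((b - 1) * (c - 1)) : ℤ) • C.associator x z y := by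
  have hsq : (Int.negOnePow ((b - 1) * (c - 1)) : ℤ) * Int.negOnePow ((b - 1) * (c - 1)) = 1 := by
    rw [← Units.val_mul, Int.units_mul_self, Units.val_one]
  rw [associator_eq_brace₂ x hy hz, associator_eq_brace₂ x hz hy, mul_comm (c - 1),
    smul_add, smul_smul, hsq, one_smul, add_comm]

theorem IsAssociativeIdeal.associator_eq_zero (hC : C.IsAssociativeIdeal) {b c : ℤ} (x : C.V)
    {y z : C.V} (hyI : y ∈ C.ideal) (hzI : z ∈ C.ideal) (hy : y ∈ C.grading b)
    (hz : z ∈ C.grading c) : C.associator x y z = 0 := by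
  rw [associator_eq_brace₂ x hy hz, hC x y z hyI hzI, hC x z y hzI hyI, smul_zero, add_zero]

theorem IsAssociativeIdeal.circle_assoc (hC : C.IsAssociativeIdeal) {b c : ℤ} (x : C.V)
    {y z : C.V} (hyI : y ∈ C.ideal) (hzI : z ∈ C.ideal) (hy : y ∈ C.grading b)
    (hz : z ∈ C.grading c) : C.circle (C.circle x y) z = C.circle x (C.circle y z) :=
  sub_eq_zero.mp (hC.associator_eq_zero x hyI hzI hy hz)

theorem IsAssociativeIdeal.bracket_circle (hC : C.IsAssociativeIdeal) {α β γ : ℤ}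
    {a x y : C.V} (hxI : x ∈ C.ideal) (hyI : y ∈ C.ideal) (ha : a ∈ C.grading α)
    (hx : x ∈ C.grading β) (hy : y ∈ C.grading γ) :
    C.bracket α (β + γ - 1) a (C.circle x y) =
      C.circle (C.bracket α β a x) y +
        (Int.negOnePow ((α - 1) * (β - 1)) : ℤ) • C.circle x (C.bracket α γ a y) := by
  have hsign : (Int.negOnePow ((α - 1) * (β + γ - 1 - 1)) : ℤ) =
      Int.negOnePow ((α - 1) * (β - 1)) * Int.negOnePow ((α - 1) * (γ - 1)) := by
    rw [show (α - 1) * (β + γ - 1 - 1) = (α - 1) * (β - 1) + (α - 1) * (γ - 1) by ring,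
      Int.negOnePow_add, Units.val_mul]
  -- `a{x∘y} = a{x}∘y` by associativity; what remains is the pre-Lie symmetry of the
  -- associator of `(x, a, y)`.
  have hassoc := hC.circle_assoc a hxI hyI hx hy
  have hswap := associator_swap x ha hy
  simp only [associator, circle] at hassoc hswap
  simp only [bracket, circle, map_sub, map_zsmul, LinearMap.sub_apply, LinearMap.smul_apply,
    hsign, ← hassoc]
  linear_combination (norm := module) (Int.negOnePow ((α - 1) * (β - 1)) : ℤ) • hswap

end BraceIdealContext

/-- **Associative operadic ideals and circle products**
(Lemma `brace_associative`): let `O` be a graded operad and `I ⊆ O` an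
associative operadic ideal, i.e. `x{y,z} = 0` whenever `y, z ∈ C(I)`.  Then:
(1) the circle product `x ∘ y := x{y}` on the ideal complex `C(I)` is
associative; (2) `C(I)` is closed under the circle product, making it a
(non-unital) graded associative algebra, and the Gerstenhaber Lie bracket
restricted to `C(I)` is the commutator of the circle product with respect to the
total degree of `C(I)` (the shifted total degree of `C(O)`); (3) for
`a ∈ C(O)` and `x, y ∈ C(I)` the Gerstenhaber relation
`[a, x∘y] = [a,x]∘y + (-1)^{(|a|-1)|x|} x∘[a,y]` holds, where `|x|` is the total
degree of `x` in `C(I)`. -/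
theorem brace_associative {k : Type u} [Field k] (C : BraceIdealContext.{u, v} k)
    (hassoc : ∀ (x y z : C.V), y ∈ C.ideal → z ∈ C.ideal → C.brace₂ x y z = 0) :
    -- (1) associativity of the circle product on `C(I)`
    (∀ (x y z : C.V), x ∈ C.ideal → y ∈ C.ideal → z ∈ C.ideal →
        (∀ a b c : ℤ, x ∈ C.grading a → y ∈ C.grading b → z ∈ C.grading c →
          C.circle (C.circle x y) z = C.circle x (C.circle y z))) ∧
    -- (2) `C(I)` is closed under the circle product, and the Gerstenhaber Lie
    -- bracket on `C(I)` is the commutator of the circle product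
    (∀ (x y : C.V), x ∈ C.ideal → y ∈ C.ideal → C.circle x y ∈ C.ideal) ∧
    (∀ (x y : C.V), x ∈ C.ideal → y ∈ C.ideal →
        ∀ a b : ℤ, x ∈ C.grading a → y ∈ C.grading b →
          C.bracket a b x y =
            C.circle x y -
              (Int.negOnePow ((a - 1) * (b - 1)) : ℤ) • C.circle y x) ∧
    -- (3) the Gerstenhaber relation
    (∀ (a x y : C.V), x ∈ C.ideal → y ∈ C.ideal →
        ∀ α β γ : ℤ, a ∈ C.grading α → x ∈ C.grading β → y ∈ C.grading γ →
          C.bracket α (β + γ - 1) a (C.circle x y) =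
            C.circle (C.bracket α β a x) y +
              (Int.negOnePow ((α - 1) * (β - 1)) : ℤ) •
                C.circle x (C.bracket α γ a y)) := by
  have hC : C.IsAssociativeIdeal := hassoc
  exact ⟨fun x _ _ _ hyI hzI _ _ _ _ hy hz => hC.circle_assoc x hyI hzI hy hz,
    fun _ _ hxI _ => C.brace₁_ideal_left hxI,
    fun _ _ _ _ _ _ _ _ => rfl,
    fun _ _ _ hxI hyI _ _ _ ha hx hy => hC.bracket_circle hxI hyI ha hx hy⟩
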